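/- Let A ⊆ ℝ² be a Jordan domain with Lipschitz-regular boundary, i ∈ {1,2} (with B¹ = A, B² = A*), and let F : ℝ² → ℝ² be such that q ↦ F(−q) is measurable and continuous on B^i ∩ (∂A)_{⊕r₀} for some r₀ > 0. Let β ∈ [1,2] and let ψ and ψ_μ be characteristic exponents of infinitely divisible distributions on ℝ such that r·ψ(r^{−1/β} z) → ψ_μ(z) for every z ∈ ℝ as r ↓ 0. Then (a) ψ_μ(z) = c·ψ_μ(c^{−1/β} z) for all c > 0 and z ∈ ℝ (the limiting distribution μ is strictly β-stable), and (b) for every n ∈ ℕ, p₁,…,p_n ∈ ℝ² and z₁,…,z_n ∈ ℝ, ∫_{∪_{j=1}^n (∂A+p_j)_{⊕r}} |ψ(r^{−1/β} z^i_r(q)) − ψ_μ(r^{−1/β} z^i_r(q))| dq → 0 as r ↓ 0, where z^i_r(q) := Σ_{j=1}^n 1_{(∂A+p_j)_{⊕r}}(q) z_j ∫₀^{2π} 1_{B^i+p_j}(q + r u(θ)) F(p_j − q − r u(θ)) · u(θ) dθ; the same convergence holds when u(θ) in the dot product is replaced by u^⊥(θ). -/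

import Mathlib

open MeasureTheory Filter Set Metric

noncomputable section

abbrev V2 : Type := EuclideanSpace ℝ (Fin 2)

/-- The unit vector `(cos θ, sin θ)`. -/
def uvec (θ : ℝ) : V2 := WithLp.toLp 2 ![Real.cos θ, Real.sin θ]

/-- The unit vector `(-sin θ, cos θ)`, perpendicular to `uvec θ`. -/
def uperp (θ : ℝ) : V2 := WithLp.toLp 2 ![-Real.sin θ, Real.cos θ]

/-- The counterclockwise perpendicular `x^⊥ = (-x₂, x₁)`. -/
def perpv (v : V2) : V2 := WithLp.toLp 2 ![-(v 1), v 0]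

/-- The tangent cone of `S` at `p`. -/
def TanCone (S : Set V2) (p : V2) : Set V2 :=
  {v | ∃ ps : ℕ → V2, (∀ n, ps n ∈ S \ {p}) ∧
    Tendsto ps atTop (nhds p) ∧
    Tendsto (fun n => ‖ps n - p‖⁻¹ • (ps n - p)) atTop (nhds (‖v‖⁻¹ • v))}

/-- The normal cone of `S` at `p`. -/
def NorCone (S : Set V2) (p : V2) : Set V2 :=
  {u | ∀ v ∈ TanCone S p, (inner ℝ u v : ℝ) ≤ 0}

/-- `C` is a Jordan curve. -/
def IsJordanCurve (C : Set V2) : Prop :=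
  C.Nonempty ∧ ∃ φ : ℝ → V2, ContinuousOn φ (Icc 0 1) ∧ InjOn φ (Ioo 0 1) ∧
    φ 0 = φ 1 ∧ φ '' Icc 0 1 = C

/-- `A` is a Jordan domain. -/
def IsJordanDomain (A : Set V2) : Prop :=
  IsCompact A ∧ IsConnected (interior A) ∧ IsJordanCurve (frontier A)

/-- `q` is a regular boundary point of `A`, with outward unit normal `uA q`. -/
def RegularAt (A : Set V2) (uA : V2 → V2) (q : V2) : Prop :=
  ‖uA q‖ = 1 ∧ (∀ v ∈ TanCone (frontier A) q, (inner ℝ (uA q) v : ℝ) = 0) ∧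
  NorCone A q = {w | ∃ l : ℝ, 0 ≤ l ∧ w = l • uA q} ∧
  NorCone (closure Aᶜ) q = {w | ∃ l : ℝ, 0 ≤ l ∧ w = -(l • uA q)}

/-- The Jordan domain `A` has Lipschitz-regular boundary, with outward unit
normal field `uA` (set to `0` at the `H¹`-null set of irregular points). -/
def LipschitzRegular (A : Set V2) (uA : V2 → V2) : Prop :=
  (∃ (K : NNReal) (φ : ℝ → V2), LipschitzOnWith K φ (Icc 0 1) ∧ InjOn φ (Ioo 0 1) ∧
    φ 0 = φ 1 ∧ φ '' Icc 0 1 = frontier A) ∧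
  (∀ q ∈ frontier A, RegularAt A uA q ∨ uA q = 0) ∧
  μH[1] {q | q ∈ frontier A ∧ ¬ RegularAt A uA q} = 0

/-- `B¹ = A`, `B² = A* = closure Aᶜ`. -/
def Bset (A : Set V2) (i : ℕ) : Set V2 := if i = 1 then A else closure Aᶜ

/-- The circle flux `G^i_{r,D}(s,q)`. -/
def GD (A : Set V2) (uA : V2 → V2) (F : V2 → V2) (i : ℕ) (r s : ℝ) (q : V2) : ℝ :=
  r * ∫ θ in (0:ℝ)..(2 * Real.pi),
    (Bset A i).indicator (fun x => (inner ℝ (F x) (uvec θ) : ℝ))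
      (q + (r * s) • uA q + r • uvec θ)

/-- The circle circulation `G^i_{r,C}(s,q)`. -/
def GC (A : Set V2) (uA : V2 → V2) (F : V2 → V2) (i : ℕ) (r s : ℝ) (q : V2) : ℝ :=
  r * ∫ θ in (0:ℝ)..(2 * Real.pi),
    (Bset A i).indicator (fun x => (inner ℝ (F x) (uperp θ) : ℝ))
      (q + (r * s) • uA q + r • uvec θ)

end

noncomputable section

/-- `ψ` is the characteristic exponent of an infinitely divisible distribution on `ℝ`:
`ψ(z) = iγz − b²z²/2 + ∫ (e^{izx} − 1 − izx 1_{|x|≤1}) ν(dx)` for a Lévy triplet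
`(γ, b, ν)`. -/
def IsIDExponent (ψ : ℝ → ℂ) : Prop :=
  ∃ (γ b : ℝ) (ν : Measure ℝ), 0 ≤ b ∧ ν {0} = 0 ∧
    (∫⁻ x, ENNReal.ofReal (min 1 (x ^ 2)) ∂ν) < ⊤ ∧
    ∀ z : ℝ, ψ z = Complex.I * γ * z - b ^ 2 * z ^ 2 / 2 +
      ∫ x, (Complex.exp (Complex.I * z * x) - 1 -
        Complex.I * z * x * (if |x| ≤ 1 then 1 else 0)) ∂ν

/-- The function `z^i_r(q)` of Lemma B.3: a weighted sum of normalized circle fluxes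
around the translated boundaries `∂A + pⱼ`. -/
def zfun (A : Set V2) (F : V2 → V2) (i : ℕ) {n : ℕ}
    (p : Fin n → V2) (zc : Fin n → ℝ) (r : ℝ) (q : V2) : ℝ :=
  ∑ j, Set.indicator (Metric.cthickening r ((· + p j) '' frontier A))
    (fun _ => zc j * ∫ θ in (0:ℝ)..(2 * Real.pi),
      ((· + p j) '' Bset A i).indicator
        (fun x => (inner ℝ (F (p j - x)) (uvec θ) : ℝ)) (q + r • uvec θ)) q

/-- Variant of `zfun` with the circulation (`u^⊥(θ)`) instead of the flux. -/
def zfunC (A : Set V2) (F : V2 → V2) (i : ℕ) {n : ℕ}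
    (p : Fin n → V2) (zc : Fin n → ℝ) (r : ℝ) (q : V2) : ℝ :=
  ∑ j, Set.indicator (Metric.cthickening r ((· + p j) '' frontier A))
    (fun _ => zc j * ∫ θ in (0:ℝ)..(2 * Real.pi),
      ((· + p j) '' Bset A i).indicator
        (fun x => (inner ℝ (F (p j - x)) (uperp θ) : ℝ)) (q + r • uvec θ)) q

end

/-!
Substituting `r ↦ c r` in the hypothesis gives `ψ_μ(z) = c ψ_μ(c^{-1/β} z)`. This
self-similarity says that the error `r ψ(r^{-1/β} z) − ψ_μ(z)` at `z = a s`, `s = ±1`, is `a^β`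
times the error at `s` with `r` replaced by `r / a^β`; together with the boundedness of `ψ` on
bounded sets it upgrades the pointwise convergence at `±1` to uniform convergence on bounded
sets of `z`. Stability also gives `ψ_μ(r^{-1/β} w) = r^{-1} ψ_μ(w)`, so the integrand is `r^{-1}`
times that error at `w = z^i_r(q)`. Since `F` is bounded near `∂A`, the values `z^i_r(q)` stay
bounded, and the parallel sets of the Lipschitz curves `∂A + p_j` have area `O(r)`; hence the
integral is `O(r) · o(r^{-1}) = o(1)`.
-/

open Topology

open Complex in
theorem norm_exp_I_mul_ofReal_sub_one_sub_le (w : ℝ) :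
    ‖exp (I * w) - 1 - I * w‖ ≤ 2 * w ^ 2 := by
  have hIw : ‖I * (w : ℂ)‖ = |w| := by simp
  rcases le_or_gt |w| 1 with hw | hw
  · calc ‖exp (I * w) - 1 - I * w‖ ≤ ‖I * (w : ℂ)‖ ^ 2 :=
          norm_exp_sub_one_sub_id_le (hIw.le.trans hw)
      _ ≤ 2 * w ^ 2 := by rw [hIw, sq_abs]; nlinarith [sq_nonneg w]
  · calc ‖exp (I * w) - 1 - I * w‖ ≤ ‖exp (I * w) - 1‖ + ‖I * (w : ℂ)‖ := norm_sub_le _ _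
      _ ≤ |w| + |w| := by rw [hIw]; gcongr; exact Real.norm_exp_I_mul_ofReal_sub_one_le
      _ ≤ 2 * w ^ 2 := by nlinarith [sq_abs w]

open Complex in
theorem norm_levyIntegrand_le (z x : ℝ) :
    ‖exp (I * z * x) - 1 - I * z * x * (if |x| ≤ 1 then 1 else 0)‖ ≤
      2 * (z ^ 2 + 1) * min 1 (x ^ 2) := by
  have hzx : I * z * x = I * ((z * x : ℝ) : ℂ) := by push_cast; ring
  split_ifs with hx
  · have hmin : min 1 (x ^ 2) = x ^ 2 := min_eq_right (by nlinarith [sq_abs x, abs_nonneg x])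
    rw [mul_one, hmin, hzx]
    refine (norm_exp_I_mul_ofReal_sub_one_sub_le _).trans ?_
    nlinarith [sq_nonneg z, sq_nonneg x, mul_nonneg (sq_nonneg z) (sq_nonneg x)]
  · have hmin : min 1 (x ^ 2) = 1 := min_eq_left (by nlinarith [sq_abs x, abs_nonneg x])
    rw [mul_zero, sub_zero, hmin, hzx]
    calc ‖exp (I * ((z * x : ℝ) : ℂ)) - 1‖ ≤ ‖exp (I * ((z * x : ℝ) : ℂ))‖ + ‖(1 : ℂ)‖ :=
          norm_sub_le _ _
      _ = 2 := by rw [mul_comm, norm_exp_ofReal_mul_I]; norm_num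
      _ ≤ 2 * (z ^ 2 + 1) * 1 := by nlinarith [sq_nonneg z]

theorem IsIDExponent.exists_bound {ψ : ℝ → ℂ} (hψ : IsIDExponent ψ) (R : ℝ) :
    ∃ C, ∀ w : ℝ, |w| ≤ R → ‖ψ w‖ ≤ C := by
  obtain ⟨γ, b, ν, -, -, hfin, hψ⟩ := hψ
  have hmin_nonneg (x : ℝ) : 0 ≤ min 1 (x ^ 2) := le_min zero_le_one (sq_nonneg x)
  have hmin_int : Integrable (fun x : ℝ => min 1 (x ^ 2)) ν :=
    ⟨(continuous_const.min (continuous_pow 2)).aestronglyMeasurable,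
      (hasFiniteIntegral_iff_ofReal (ae_of_all _ hmin_nonneg)).2 hfin⟩
  refine ⟨|γ| * R + b ^ 2 * R ^ 2 / 2 + 2 * (R ^ 2 + 1) * ∫ x, min 1 (x ^ 2) ∂ν,
    fun w hw => ?_⟩
  have hw2 : w ^ 2 ≤ R ^ 2 := by nlinarith [sq_abs w, abs_nonneg w]
  have hlevy : ‖∫ x, (Complex.exp (Complex.I * w * x) - 1 -
      Complex.I * w * x * (if |x| ≤ 1 then 1 else 0)) ∂ν‖ ≤
        2 * (R ^ 2 + 1) * ∫ x, min 1 (x ^ 2) ∂ν := by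
    rw [← integral_const_mul]
    refine norm_integral_le_of_norm_le (hmin_int.const_mul _) (ae_of_all _ fun x => ?_)
    exact (norm_levyIntegrand_le w x).trans (by gcongr)
  rw [hψ w]
  refine (norm_add_le _ _).trans (add_le_add ((norm_sub_le _ _).trans ?_) hlevy)
  gcongr
  · simpa using mul_le_mul_of_nonneg_left hw (abs_nonneg γ)
  · simpa [Complex.norm_real] using
      div_le_div_of_nonneg_right (mul_le_mul_of_nonneg_left hw2 (sq_nonneg b)) zero_le_two

def IsStrictlyStable (β : ℝ) (ψμ : ℝ → ℂ) : Prop :=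
  ∀ c : ℝ, 0 < c → ∀ z : ℝ, ψμ z = (c : ℂ) * ψμ (c ^ (-1/β) * z)

theorem exists_sign_eq_abs_mul (z : ℝ) : ∃ s : ℝ, (s = 1 ∨ s = -1) ∧ z = |z| * s := by
  rcases abs_choice z with h | h
  exacts [⟨1, .inl rfl, by rw [h, mul_one]⟩, ⟨-1, .inr rfl, by rw [h]; ring⟩]

theorem abs_rpow_neg_one_div_mul_le {β r δ z : ℝ} (hβ : 0 < β) (hr : 0 < r) (hδ : 0 < δ)
    (h : δ * |z| ^ β ≤ r) : |r ^ (-1/β) * z| ≤ δ ^ (-1/β) := by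
  have hpow (x : ℝ) (hx : 0 ≤ x) : (x ^ (-1/β)) ^ β = x⁻¹ := by
    rw [← Real.rpow_mul hx, show -1 / β * β = -1 by field_simp, Real.rpow_neg_one]
  rw [abs_mul, abs_of_pos (Real.rpow_pos_of_pos hr _),
    ← Real.rpow_le_rpow_iff (by positivity) (by positivity) hβ,
    Real.mul_rpow (by positivity) (abs_nonneg z), hpow r hr.le, hpow δ hδ.le,
    inv_mul_le_iff₀ hr, ← div_eq_mul_inv, le_div_iff₀ hδ]
  linarith

section StableLimit

variable {β : ℝ} {ψ ψμ : ℝ → ℂ}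

theorem isStrictlyStable_of_tendsto
    (hconv : ∀ z : ℝ, Tendsto (fun r : ℝ => (r : ℂ) * ψ (r ^ (-1/β) * z)) (𝓝[>] 0) (𝓝 (ψμ z))) :
    IsStrictlyStable β ψμ := by
  intro c hc z
  have hmap : Tendsto (c * ·) (𝓝[>] (0:ℝ)) (𝓝[>] 0) := by
    nth_rewrite 1 [← comap_mulLeft_nhdsGT_zero hc]
    exact tendsto_comap
  refine tendsto_nhds_unique ((hconv z).comp hmap)
    (((hconv (c ^ (-1/β) * z)).const_mul (c : ℂ)).congr' ?_)
  filter_upwards [self_mem_nhdsWithin] with r (hr : 0 < r)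
  simp only [Function.comp_apply, Complex.ofReal_mul, Real.mul_rpow hc.le hr.le]
  ring_nf

namespace IsStrictlyStable

theorem apply_zero (h : IsStrictlyStable β ψμ) : ψμ 0 = 0 := by
  have h2 := h 2 two_pos 0
  rw [mul_zero] at h2
  push_cast at h2
  linear_combination -h2

theorem apply_mul (h : IsStrictlyStable β ψμ) (hβ : β ≠ 0) {a : ℝ} (ha : 0 < a) (s : ℝ) :
    ψμ (a * s) = (a ^ β : ℝ) * ψμ s := by
  rw [h (a ^ β) (Real.rpow_pos_of_pos ha β), ← Real.rpow_mul ha.le,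
    show β * (-1 / β) = -1 by field_simp, Real.rpow_neg_one, inv_mul_cancel_left₀ ha.ne']

theorem norm_apply_le (h : IsStrictlyStable β ψμ) (hβ : 0 < β) (z : ℝ) :
    ‖ψμ z‖ ≤ |z| ^ β * max ‖ψμ 1‖ ‖ψμ (-1)‖ := by
  rcases eq_or_ne z 0 with rfl | hz
  · rw [h.apply_zero, norm_zero]; positivity
  obtain ⟨s, hs, hzs⟩ := exists_sign_eq_abs_mul z
  have hψμs : ‖ψμ s‖ ≤ max ‖ψμ 1‖ ‖ψμ (-1)‖ := by
    rcases hs with rfl | rfl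
    exacts [le_max_left _ _, le_max_right _ _]
  calc ‖ψμ z‖ = |z| ^ β * ‖ψμ s‖ := by
        conv_lhs => rw [hzs, h.apply_mul hβ.ne' (abs_pos.2 hz)]
        rw [norm_mul, Complex.norm_real, Real.norm_of_nonneg (by positivity)]
    _ ≤ _ := by gcongr

theorem sub_apply_mul_eq (h : IsStrictlyStable β ψμ) (hβ : β ≠ 0) {a r : ℝ} (ha : 0 < a)
    (hr : 0 ≤ r) (s : ℝ) :
    (r : ℂ) * ψ (r ^ (-1/β) * (a * s)) - ψμ (a * s) =
      (a ^ β : ℝ) * (((r / a ^ β : ℝ) : ℂ) * ψ ((r / a ^ β) ^ (-1/β) * s) - ψμ s) := by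
  have haβ : 0 < a ^ β := Real.rpow_pos_of_pos ha β
  have hrescale : (r / a ^ β) ^ (-1/β) * s = r ^ (-1/β) * (a * s) := by
    rw [Real.div_rpow hr haβ.le, ← Real.rpow_mul ha.le, show β * (-1 / β) = -1 by field_simp,
      Real.rpow_neg_one, div_inv_eq_mul]
    ring
  have haβ' : ((a ^ β : ℝ) : ℂ) ≠ 0 := Complex.ofReal_ne_zero.2 haβ.ne'
  rw [hrescale, h.apply_mul hβ ha, Complex.ofReal_div]
  field_simp

theorem norm_sub_le_of_lt_rpow (h : IsStrictlyStable β ψμ) (hβ : 0 < β) {δ ε : ℝ}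
    (hconv : ∀ ρ ∈ Ioo 0 δ, ∀ s : ℝ, (s = 1 ∨ s = -1) →
      ‖(ρ : ℂ) * ψ (ρ ^ (-1/β) * s) - ψμ s‖ ≤ ε)
    {r z : ℝ} (hr : 0 < r) (hrz : r < δ * |z| ^ β) :
    ‖(r : ℂ) * ψ (r ^ (-1/β) * z) - ψμ z‖ ≤ |z| ^ β * ε := by
  have hz : 0 < |z| := by
    refine abs_pos.2 fun hz0 => ?_
    rw [hz0, abs_zero, Real.zero_rpow hβ.ne', mul_zero] at hrz
    exact hrz.not_gt hr
  have hzβ : 0 < |z| ^ β := Real.rpow_pos_of_pos hz β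
  obtain ⟨s, hs, hzs⟩ := exists_sign_eq_abs_mul z
  conv_lhs => rw [hzs, h.sub_apply_mul_eq hβ.ne' hz hr.le, norm_mul, Complex.norm_real,
    Real.norm_of_nonneg hzβ.le]
  exact mul_le_mul_of_nonneg_left
    (hconv _ ⟨by positivity, (div_lt_iff₀ hzβ).2 hrz⟩ s hs) hzβ.le

theorem norm_sub_le_of_rpow_le (h : IsStrictlyStable β ψμ) (hβ : 0 < β) {δ C : ℝ} (hδ : 0 < δ)
    (hψ : ∀ w : ℝ, |w| ≤ δ ^ (-1/β) → ‖ψ w‖ ≤ C) {r z : ℝ} (hr : 0 < r)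
    (hrz : δ * |z| ^ β ≤ r) :
    ‖(r : ℂ) * ψ (r ^ (-1/β) * z) - ψμ z‖ ≤ r * (C + max ‖ψμ 1‖ ‖ψμ (-1)‖ / δ) := by
  have hψμ : ‖ψμ z‖ ≤ r * (max ‖ψμ 1‖ ‖ψμ (-1)‖ / δ) := by
    refine (h.norm_apply_le hβ z).trans ?_
    rw [mul_div_assoc', le_div_iff₀ hδ]
    nlinarith [mul_le_mul_of_nonneg_right hrz
      (le_max_of_le_left (norm_nonneg _) : 0 ≤ max ‖ψμ 1‖ ‖ψμ (-1)‖)]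
  rw [mul_add]
  refine (norm_sub_le _ _).trans (add_le_add ?_ hψμ)
  rw [norm_mul, Complex.norm_real, Real.norm_of_nonneg hr.le]
  exact mul_le_mul_of_nonneg_left (hψ _ (abs_rpow_neg_one_div_mul_le hβ hr hδ hrz)) hr.le

theorem tendstoUniformlyOn (h : IsStrictlyStable β ψμ) (hβ : 0 < β)
    (hψ : ∀ R, ∃ C, ∀ w : ℝ, |w| ≤ R → ‖ψ w‖ ≤ C)
    (hconv : ∀ z : ℝ, Tendsto (fun r : ℝ => (r : ℂ) * ψ (r ^ (-1/β) * z)) (𝓝[>] 0) (𝓝 (ψμ z)))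
    (M : ℝ) :
    TendstoUniformlyOn (fun (r : ℝ) z => (r : ℂ) * ψ (r ^ (-1/β) * z)) ψμ (𝓝[>] 0)
      (Icc (-M) M) := by
  rw [Metric.tendstoUniformlyOn_iff]
  intro ε hε
  set ε₁ := ε / (|M| ^ β + 1) with hε₁
  obtain ⟨δ, hδ : 0 < δ, hsub⟩ := mem_nhdsGT_iff_exists_Ioo_subset.1
    (((hconv 1).eventually (closedBall_mem_nhds _ (by positivity : 0 < ε₁))).and
      ((hconv (-1)).eventually (closedBall_mem_nhds _ (by positivity : 0 < ε₁))))
  have hconv₁ : ∀ ρ ∈ Ioo 0 δ, ∀ s : ℝ, (s = 1 ∨ s = -1) →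
      ‖(ρ : ℂ) * ψ (ρ ^ (-1/β) * s) - ψμ s‖ ≤ ε₁ := by
    rintro ρ hρ s (rfl | rfl) <;> rw [← dist_eq_norm]
    exacts [(hsub hρ).1, (hsub hρ).2]
  obtain ⟨C, hC⟩ := hψ (δ ^ (-1/β))
  have hC0 : 0 ≤ C := (norm_nonneg _).trans (hC 0 (by simp; positivity))
  filter_upwards [Ioo_mem_nhdsGT (by positivity : 0 < ε / (C + max ‖ψμ 1‖ ‖ψμ (-1)‖ / δ + 1))]
    with r ⟨hr, hrε⟩ z hz
  rw [dist_comm, dist_eq_norm]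
  rcases lt_or_ge r (δ * |z| ^ β) with hrz | hrz
  · have hzM : |z| ^ β ≤ |M| ^ β :=
      Real.rpow_le_rpow (abs_nonneg z) ((abs_le.2 hz).trans (le_abs_self M)) hβ.le
    calc _ ≤ |z| ^ β * ε₁ := h.norm_sub_le_of_lt_rpow hβ hconv₁ hr hrz
      _ ≤ |M| ^ β * ε₁ := by gcongr
      _ < ε := by
          rw [hε₁, mul_div_assoc', div_lt_iff₀ (by positivity)]
          nlinarith [Real.rpow_nonneg (abs_nonneg M) β]
  · calc _ ≤ r * (C + max ‖ψμ 1‖ ‖ψμ (-1)‖ / δ) := h.norm_sub_le_of_rpow_le hβ hδ hC hr hrz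
      _ < ε := by
          rw [lt_div_iff₀ (by positivity)] at hrε
          nlinarith

end IsStrictlyStable

end StableLimit

theorem norm_uvec (θ : ℝ) : ‖uvec θ‖ = 1 := by
  simp [uvec, EuclideanSpace.norm_eq, Fin.sum_univ_two]

theorem norm_uperp (θ : ℝ) : ‖uperp θ‖ = 1 := by
  simp [uperp, EuclideanSpace.norm_eq, Fin.sum_univ_two]

theorem exists_nat_le_abs_sub_div_le {t : ℝ} (ht : t ∈ Icc (0 : ℝ) 1) {N : ℕ} (hN : 0 < N) :
    ∃ k ≤ N, |t - k / N| ≤ 1 / N := by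
  have hN' : (0 : ℝ) < N := Nat.cast_pos.2 hN
  have htN : 0 ≤ t * N := by nlinarith [ht.1]
  refine ⟨⌊t * N⌋₊, Nat.cast_le.1 ((Nat.floor_le htN).trans (by nlinarith [ht.2])), ?_⟩
  have h1 := Nat.floor_le htN
  have h2 := Nat.lt_floor_add_one (t * N)
  rw [show t - ⌊t * N⌋₊ / N = (t * N - ⌊t * N⌋₊) / N by field_simp,
    abs_of_nonneg (div_nonneg (by linarith) hN'.le), div_le_div_iff_of_pos_right hN']
  linarith

theorem LipschitzOnWith.cthickening_image_Icc_subset {X : Type*} [PseudoMetricSpace X]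
    {K : NNReal} {φ : ℝ → X} (hφ : LipschitzOnWith K φ (Icc 0 1)) {r : ℝ} (hr : 0 ≤ r)
    {N : ℕ} (hN : 0 < N) :
    cthickening r (φ '' Icc 0 1) ⊆
      ⋃ k ∈ Finset.range (N + 1), closedBall (φ (k / N)) (r + K / N) := by
  rw [(isCompact_Icc.image_of_continuousOn hφ.continuousOn).cthickening_eq_biUnion_closedBall hr]
  rw [biUnion_image]
  intro y hy
  obtain ⟨t, ht, hy⟩ := mem_iUnion₂.1 hy
  obtain ⟨k, hkN, hk⟩ := exists_nat_le_abs_sub_div_le ht hN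
  have hkI : (k / N : ℝ) ∈ Icc 0 1 :=
    ⟨by positivity, div_le_one_of_le₀ (Nat.cast_le.2 hkN) (Nat.cast_nonneg N)⟩
  refine mem_biUnion (Finset.mem_range_succ_iff.2 hkN) (mem_closedBall.2 ?_)
  calc dist y (φ (k / N)) ≤ dist y (φ t) + dist (φ t) (φ (k / N)) := dist_triangle _ _ _
    _ ≤ r + K * (1 / N) := by
        gcongr
        · exact mem_closedBall.1 hy
        · exact (hφ.dist_le_mul t ht _ hkI).trans (by rw [Real.dist_eq]; gcongr)
    _ = r + K / N := by ring

theorem LipschitzOnWith.volume_cthickening_image_Icc_le {K : NNReal} {φ : ℝ → V2}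
    (hφ : LipschitzOnWith K φ (Icc 0 1)) :
    ∃ C, 0 ≤ C ∧ ∀ r ∈ Ioc (0 : ℝ) 1,
      volume (cthickening r (φ '' Icc 0 1)) ≤ ENNReal.ofReal (C * r) := by
  refine ⟨3 * Real.pi * (K + 1) ^ 2, by positivity, fun r ⟨hr, hr1⟩ => ?_⟩
  set N := ⌈1 / r⌉₊
  have hN : (0 : ℝ) < N := Nat.cast_pos.2 (Nat.ceil_pos.2 (by positivity))
  have hrad : r + K / N ≤ (K + 1) * r := by
    have : (K : ℝ) / N ≤ K * r := by
      rw [div_le_iff₀ hN]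
      nlinarith [K.coe_nonneg, (div_le_iff₀ hr).1 (Nat.le_ceil (1 / r))]
    linarith
  have hN1r : (N + 1) * r ≤ 3 := by
    have hlt : (N : ℝ) < 1 / r + 1 := Nat.ceil_lt_add_one (by positivity)
    calc (N + 1) * r ≤ (1 / r + 2) * r := by gcongr ?_ * r; linarith
      _ = 1 + 2 * r := by field_simp
      _ ≤ 3 := by linarith
  have hball (k : ℕ) : volume (closedBall (φ (k / N)) (r + K / N)) ≤
      ENNReal.ofReal (((K + 1) * r) ^ 2 * Real.pi) := by
    grw [hrad, EuclideanSpace.volume_closedBall_fin_two, ← ENNReal.ofReal_pow (by positivity),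
      ← ENNReal.ofReal_mul (by positivity)]
  calc volume (cthickening r (φ '' Icc 0 1))
      ≤ ∑ k ∈ Finset.range (N + 1), volume (closedBall (φ (k / N)) (r + K / N)) :=
        (measure_mono (hφ.cthickening_image_Icc_subset hr.le (Nat.cast_pos.1 hN))).trans
          (measure_biUnion_finset_le _ _)
    _ ≤ (N + 1 : ℕ) • ENNReal.ofReal (((K + 1) * r) ^ 2 * Real.pi) := by
        simpa only [Finset.card_range] using
          Finset.sum_le_card_nsmul (Finset.range (N + 1)) _ _ fun k _ => hball k
    _ ≤ ENNReal.ofReal (3 * Real.pi * (K + 1) ^ 2 * r) := by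
        rw [nsmul_eq_mul, ← ENNReal.ofReal_natCast, ← ENNReal.ofReal_mul (by positivity)]
        refine ENNReal.ofReal_le_ofReal ?_
        push_cast
        nlinarith [(by positivity : 0 ≤ Real.pi * (K + 1) ^ 2 * r)]

theorem volume_iUnion_cthickening_image_add_le {K : NNReal} {φ : ℝ → V2}
    (hφ : LipschitzOnWith K φ (Icc 0 1)) {n : ℕ} (p : Fin n → V2) :
    ∃ C, 0 ≤ C ∧ ∀ r ∈ Ioc (0 : ℝ) 1,
      volume (⋃ j, cthickening r ((· + p j) '' (φ '' Icc 0 1))) ≤ ENNReal.ofReal (C * r) := by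
  have hφp (j : Fin n) : LipschitzOnWith K ((· + p j) ∘ φ) (Icc 0 1) := by
    simpa using (isometry_add_right (p j)).lipschitz.comp_lipschitzOnWith hφ
  choose C hC0 hC using fun j => (hφp j).volume_cthickening_image_Icc_le
  refine ⟨∑ j, C j, Finset.sum_nonneg fun j _ => hC0 j, fun r hr => ?_⟩
  calc volume (⋃ j, cthickening r ((· + p j) '' (φ '' Icc 0 1)))
      ≤ ∑ j, volume (cthickening r ((· + p j) '' (φ '' Icc 0 1))) := measure_iUnion_fintype_le _ _
    _ ≤ ∑ j, ENNReal.ofReal (C j * r) := by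
        gcongr with j
        rw [← image_comp]
        exact hC j r hr
    _ = ENNReal.ofReal ((∑ j, C j) * r) := by
        rw [Finset.sum_mul, ENNReal.ofReal_sum_of_nonneg fun j _ => mul_nonneg (hC0 j) hr.1.le]

theorem mem_cthickening_image_add_right_iff {E : Type*} [SeminormedAddCommGroup E] {δ : ℝ}
    {S : Set E} {p x : E} : x ∈ cthickening δ ((· + p) '' S) ↔ x - p ∈ cthickening δ S := by
  rw [mem_cthickening_iff, mem_cthickening_iff,
    ← infEDist_image (isometry_add_right p) (x := x - p), sub_add_cancel]

theorem abs_indicator_image_add_right_inner_le {B K : Set V2} {F : V2 → V2} {CF : ℝ}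
    (hCF : 0 ≤ CF) (hF : ∀ y ∈ B ∩ K, ‖F (-y)‖ ≤ CF) {p x u : V2} (hx : x - p ∈ K)
    (hu : ‖u‖ ≤ 1) :
    |((· + p) '' B).indicator (fun x => (inner ℝ (F (p - x)) u : ℝ)) x| ≤ CF := by
  by_cases hxB : x ∈ (· + p) '' B
  · rw [indicator_of_mem hxB]
    obtain ⟨y, hy, rfl⟩ := hxB
    rw [add_sub_cancel_right] at hx
    calc |(inner ℝ (F (p - (y + p))) u : ℝ)| ≤ ‖F (-y)‖ * ‖u‖ := by
          rw [sub_add_cancel_right]; exact abs_real_inner_le_norm _ _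
      _ ≤ CF * 1 := by gcongr; exact hF y ⟨hy, hx⟩
      _ = CF := mul_one CF
  · rw [indicator_of_notMem hxB, abs_zero]
    exact hCF

-- `zfun` and `zfunC` are, by definition, `zfunAlong` with `e = uvec` and `e = uperp`.
noncomputable def zfunAlong (A : Set V2) (F : V2 → V2) (i : ℕ) {n : ℕ} (p : Fin n → V2)
    (zc : Fin n → ℝ) (e : ℝ → V2) (r : ℝ) (q : V2) : ℝ :=
  ∑ j, Set.indicator (Metric.cthickening r ((· + p j) '' frontier A))
    (fun _ => zc j * ∫ θ in (0:ℝ)..(2 * Real.pi),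
      ((· + p j) '' Bset A i).indicator
        (fun x => (inner ℝ (F (p j - x)) (e θ) : ℝ)) (q + r • uvec θ)) q

theorem abs_zfunAlong_le {A : Set V2} {F : V2 → V2} {i : ℕ} {CF r₀ : ℝ} (hCF : 0 ≤ CF)
    (hF : ∀ y ∈ Bset A i ∩ cthickening r₀ (frontier A), ‖F (-y)‖ ≤ CF)
    {e : ℝ → V2} (he : ∀ θ, ‖e θ‖ ≤ 1) {n : ℕ} (p : Fin n → V2) (zc : Fin n → ℝ)
    {r : ℝ} (hr : 0 ≤ r) (h2r : 2 * r ≤ r₀) (q : V2) :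
    |zfunAlong A F i p zc e r q| ≤ ∑ j, |zc j| * (CF * (2 * Real.pi)) := by
  refine (Finset.abs_sum_le_sum_abs _ _).trans (Finset.sum_le_sum fun j _ => ?_)
  by_cases hq : q ∈ cthickening r ((· + p j) '' frontier A)
  · rw [indicator_of_mem hq, abs_mul]
    gcongr
    have hcircle (θ : ℝ) : q + r • uvec θ - p j ∈ cthickening r₀ (frontier A) := by
      refine cthickening_mono (by linarith) _ (cthickening_cthickening_subset hr hr _ ?_)
      refine mem_cthickening_of_dist_le _ (q - p j) _ _
        (mem_cthickening_image_add_right_iff.1 hq) ?_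
      rw [dist_eq_norm, add_sub_right_comm, add_sub_cancel_left, norm_smul, norm_uvec,
        Real.norm_of_nonneg hr, mul_one]
    have := intervalIntegral.norm_integral_le_of_norm_le_const (a := 0) (b := 2 * Real.pi)
      fun θ _ => (Real.norm_eq_abs _).trans_le
        (abs_indicator_image_add_right_inner_le hCF hF (hcircle θ) (he θ))
    rwa [sub_zero, abs_of_pos Real.two_pi_pos, Real.norm_eq_abs] at this
  · rw [indicator_of_notMem hq, abs_zero]
    positivity

theorem isClosed_Bset {A : Set V2} (hA : IsClosed A) (i : ℕ) : IsClosed (Bset A i) := by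
  unfold Bset
  split_ifs
  exacts [hA, isClosed_closure]

theorem isCompact_Bset_inter_cthickening {A : Set V2} (hA : IsCompact A) (i : ℕ) (r : ℝ) :
    IsCompact (Bset A i ∩ cthickening r (frontier A)) :=
  (hA.of_isClosed_subset isClosed_frontier hA.isClosed.frontier_subset).cthickening.inter_left
    (isClosed_Bset hA.isClosed i)

theorem IsStrictlyStable.tendsto_setIntegral_norm_sub {β : ℝ} {ψ ψμ : ℝ → ℂ}
    (h : IsStrictlyStable β ψμ) {α : Type*} [MeasurableSpace α] {μ : Measure α} {M C : ℝ}
    (hC : 0 ≤ C)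
    (hunif : TendstoUniformlyOn (fun (r : ℝ) z => (r : ℂ) * ψ (r ^ (-1/β) * z)) ψμ (𝓝[>] 0)
      (Icc (-M) M))
    {U : ℝ → Set α} {w : ℝ → α → ℝ}
    (hU : ∀ᶠ r in 𝓝[>] 0, μ (U r) ≤ ENNReal.ofReal (C * r) ∧ ∀ q ∈ U r, w r q ∈ Icc (-M) M) :
    Tendsto (fun r : ℝ => ∫ q in U r, ‖ψ (r ^ (-1/β) * w r q) - ψμ (r ^ (-1/β) * w r q)‖ ∂μ)
      (𝓝[>] 0) (𝓝 0) := by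
  rw [Metric.tendstoUniformlyOn_iff] at hunif
  rw [NormedAddGroup.tendsto_nhds_zero]
  intro ε hε
  set ε' := ε / (C + 1) with hε'
  filter_upwards [hU, hunif ε' (by positivity), self_mem_nhdsWithin]
    with r ⟨hμU, hw⟩ hclose (hr : 0 < r)
  have hpt : ∀ q ∈ U r, ‖‖ψ (r ^ (-1/β) * w r q) - ψμ (r ^ (-1/β) * w r q)‖‖ ≤ ε' / r := by
    intro q hq
    rw [norm_norm, le_div_iff₀ hr]
    calc ‖ψ (r ^ (-1/β) * w r q) - ψμ (r ^ (-1/β) * w r q)‖ * r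
        = dist (ψμ (w r q)) ((r : ℂ) * ψ (r ^ (-1/β) * w r q)) := by
          rw [h r hr (w r q), dist_comm, dist_eq_norm, ← mul_sub, norm_mul, Complex.norm_real,
            Real.norm_of_nonneg hr.le, mul_comm]
      _ ≤ ε' := (hclose _ (hw q hq)).le
  calc ‖∫ q in U r, ‖ψ (r ^ (-1/β) * w r q) - ψμ (r ^ (-1/β) * w r q)‖ ∂μ‖
      ≤ ε' / r * μ.real (U r) :=
        norm_setIntegral_le_of_norm_le_const (hμU.trans_lt ENNReal.ofReal_lt_top) hpt
    _ ≤ ε' / r * (C * r) := by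
        gcongr
        exact ENNReal.toReal_le_of_le_ofReal (by positivity) hμU
    _ = C * ε / (C + 1) := by rw [hε']; field_simp
    _ < ε := by
        rw [div_lt_iff₀ (by positivity)]
        nlinarith

theorem stable_approximation_general
    (A : Set V2) (uA : V2 → V2) (hA : IsJordanDomain A) (hreg : LipschitzRegular A uA)
    (i : ℕ) (F : V2 → V2) (r₀ : ℝ) (hr₀ : 0 < r₀)
    (hFcont : ContinuousOn (fun q => F (-q))
      (Bset A i ∩ Metric.cthickening r₀ (frontier A)))
    (β : ℝ) (hβ : β ∈ Set.Icc (1:ℝ) 2) (ψ ψμ : ℝ → ℂ)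
    (hψ : IsIDExponent ψ)
    (hconv : ∀ z : ℝ, Tendsto (fun r : ℝ => (r : ℂ) * ψ (r ^ (-1/β) * z))
      (nhdsWithin 0 (Set.Ioi 0)) (nhds (ψμ z))) :
    (∀ c : ℝ, 0 < c → ∀ z : ℝ, ψμ z = (c : ℂ) * ψμ (c ^ (-1/β) * z)) ∧
    (∀ (n : ℕ) (p : Fin n → V2) (zc : Fin n → ℝ),
      Tendsto (fun r : ℝ =>
          ∫ q in ⋃ j, Metric.cthickening r ((· + p j) '' frontier A),
            ‖ψ (r ^ (-1/β) * zfun A F i p zc r q) -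
              ψμ (r ^ (-1/β) * zfun A F i p zc r q)‖ ∂volume)
        (nhdsWithin 0 (Set.Ioi 0)) (nhds 0)) ∧
    (∀ (n : ℕ) (p : Fin n → V2) (zc : Fin n → ℝ),
      Tendsto (fun r : ℝ =>
          ∫ q in ⋃ j, Metric.cthickening r ((· + p j) '' frontier A),
            ‖ψ (r ^ (-1/β) * zfunC A F i p zc r q) -
              ψμ (r ^ (-1/β) * zfunC A F i p zc r q)‖ ∂volume)
        (nhdsWithin 0 (Set.Ioi 0)) (nhds 0)) := by
  have hstable := isStrictlyStable_of_tendsto hconv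
  obtain ⟨⟨K, φ, hφ, -, -, hφA⟩, -⟩ := hreg
  obtain ⟨CF, hCF0, hCF⟩ :=
    ((isCompact_Bset_inter_cthickening hA.1 i r₀).image_of_continuousOn hFcont).isBounded
      |>.exists_pos_norm_le
  rw [forall_mem_image] at hCF
  have hzfunAlong (e : ℝ → V2) (he : ∀ θ, ‖e θ‖ ≤ 1) (n : ℕ) (p : Fin n → V2)
      (zc : Fin n → ℝ) :
      Tendsto (fun r : ℝ => ∫ q in ⋃ j, cthickening r ((· + p j) '' frontier A),
          ‖ψ (r ^ (-1/β) * zfunAlong A F i p zc e r q) -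
            ψμ (r ^ (-1/β) * zfunAlong A F i p zc e r q)‖) (𝓝[>] 0) (𝓝 0) := by
    obtain ⟨C, hC0, hC⟩ := volume_iUnion_cthickening_image_add_le hφ p
    refine hstable.tendsto_setIntegral_norm_sub hC0 (hstable.tendstoUniformlyOn
      (by linarith [hβ.1]) hψ.exists_bound hconv (∑ j, |zc j| * (CF * (2 * Real.pi)))) ?_
    filter_upwards [Ioc_mem_nhdsGT (lt_min one_pos (half_pos hr₀))] with r ⟨hr, hr'⟩
    refine ⟨hφA ▸ hC r ⟨hr, hr'.trans (min_le_left _ _)⟩, fun q _ => abs_le.1 ?_⟩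
    exact abs_zfunAlong_le hCF0.le hCF he p zc hr.le
      (by linarith [hr'.trans (min_le_right _ _)]) q
  exact ⟨hstable, hzfunAlong uvec (fun θ => (norm_uvec θ).le),
    hzfunAlong uperp (fun θ => (norm_uperp θ).le)⟩

/-- If `r ψ(r^{−1/β} z) → ψ_μ(z)` as `r ↓ 0` for characteristic
exponents of infinitely divisible laws, then `ψ_μ` is strictly `β`-stable, and `ψ` can
be replaced by `ψ_μ` in the boundary functionals, with an error that vanishes in `L¹`
on the parallel sets of the translated boundaries. -/
theorem stable_approximation
    (A : Set V2) (uA : V2 → V2) (hA : IsJordanDomain A) (hreg : LipschitzRegular A uA)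
    (i : ℕ) (hi : i = 1 ∨ i = 2) (F : V2 → V2) (r₀ : ℝ) (hr₀ : 0 < r₀)
    (hFmeas : Measurable fun q => F (-q))
    (hFcont : ContinuousOn (fun q => F (-q))
      (Bset A i ∩ Metric.cthickening r₀ (frontier A)))
    (β : ℝ) (hβ : β ∈ Set.Icc (1:ℝ) 2) (ψ ψμ : ℝ → ℂ)
    (hψ : IsIDExponent ψ) (hψμ : IsIDExponent ψμ)
    (hconv : ∀ z : ℝ, Tendsto (fun r : ℝ => (r : ℂ) * ψ (r ^ (-1/β) * z))
      (nhdsWithin 0 (Set.Ioi 0)) (nhds (ψμ z))) :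
    (∀ c : ℝ, 0 < c → ∀ z : ℝ, ψμ z = (c : ℂ) * ψμ (c ^ (-1/β) * z)) ∧
    (∀ (n : ℕ) (p : Fin n → V2) (zc : Fin n → ℝ),
      Tendsto (fun r : ℝ =>
          ∫ q in ⋃ j, Metric.cthickening r ((· + p j) '' frontier A),
            ‖ψ (r ^ (-1/β) * zfun A F i p zc r q) -
              ψμ (r ^ (-1/β) * zfun A F i p zc r q)‖ ∂volume)
        (nhdsWithin 0 (Set.Ioi 0)) (nhds 0)) ∧
    (∀ (n : ℕ) (p : Fin n → V2) (zc : Fin n → ℝ),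
      Tendsto (fun r : ℝ =>
          ∫ q in ⋃ j, Metric.cthickening r ((· + p j) '' frontier A),
            ‖ψ (r ^ (-1/β) * zfunC A F i p zc r q) -
              ψμ (r ^ (-1/β) * zfunC A F i p zc r q)‖ ∂volume)
        (nhdsWithin 0 (Set.Ioi 0)) (nhds 0)) :=
  stable_approximation_general A uA hA hreg i F r₀ hr₀ hFcont β hβ ψ ψμ hψ hconv
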